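/- Let A and H be groups, φ : A →* H an injective homomorphism, n : ℕ, and let G = Monoid.PushoutI (fun _ : Fin n => φ) be the star of isomorphic groups with n rays, with ray-permuting homomorphisms Φ σ : G →* G for σ : Equiv.Perm (Fin n). Suppose g ∈ G admits a reduced word datum of length ≥ 1 in which every index i : Fin n is represented. If σ : Equiv.Perm (Fin n) satisfies Φ σ g = g, then σ = 1. -/

import Mathlib

open Monoid

/-- A reduced word datum of length `l.length` for an element `g` of the star of isomorphic
groups `Monoid.PushoutI (fun _ : Fin n => φ)`. -/
def IsReducedDatum {A H : Type*} [Group A] [Group H] {n : ℕ} (φ : A →* H)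
    (g : Monoid.PushoutI (fun _ : Fin n => φ)) (a : A) (l : List (Fin n × H)) : Prop :=
  (∀ p ∈ l, p.2 ∉ Set.range φ) ∧
  l.Chain' (fun p q => p.1 ≠ q.1) ∧
  g = Monoid.PushoutI.base (fun _ : Fin n => φ) a *
      (l.map fun p => Monoid.PushoutI.of (φ := fun _ : Fin n => φ) p.1 p.2).prod

/-!
By the normal form theorem for amalgamated products, the sequence of indices of a reduced word
is determined by the element it represents. A ray-permuting homomorphism `Φ σ` fixes the base
group, so it turns a reduced datum `(a, [(iⱼ, hⱼ)])` for `g` into the reduced datum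
`(a, [(σ iⱼ, hⱼ)])` for `Φ σ g`. If `Φ σ g = g`, comparing index sequences shows that `σ` fixes
every represented index.
-/

namespace Monoid.PushoutI

section IndexSequence

variable {ι : Type*} {G : ι → Type*} {H : Type*} [∀ i, Group (G i)] [Group H]
  {φ : ∀ i, H →* G i}

theorem Reduced.map_fst_eq_of_base_mul_prod_eq (hφ : ∀ i, Function.Injective (φ i))
    {w₁ w₂ : CoprodI.Word G} (hw₁ : Reduced φ w₁) (hw₂ : Reduced φ w₂) {a₁ a₂ : H}
    (h : base φ a₁ * ofCoprodI w₁.prod = base φ a₂ * ofCoprodI w₂.prod) :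
    w₁.toList.map Sigma.fst = w₂.toList.map Sigma.fst := by
  classical
  obtain ⟨d⟩ := NormalWord.transversal_nonempty φ hφ
  obtain ⟨v₁, hv₁, hmap₁⟩ := hw₁.exists_normalWord_prod_eq d
  obtain ⟨v₂, hv₂, hmap₂⟩ := hw₂.exists_normalWord_prod_eq d
  have hv : a₁ • v₁ = a₂ • v₂ :=
    NormalWord.prod_injective (by
      rwa [NormalWord.prod_base_smul, NormalWord.prod_base_smul, hv₁, hv₂])
  rw [← hmap₁, ← hmap₂]
  exact congrArg (·.toList.map Sigma.fst) hv

end IndexSequence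

variable {ι A H : Type*} [Group A] [Group H] {φ : A →* H}

theorem comp_base_of_forall_comp_of [Nonempty ι]
    {Ψ : PushoutI (fun _ : ι => φ) →* PushoutI (fun _ : ι => φ)} {σ : ι → ι}
    (hΨ : ∀ i, Ψ.comp (of (φ := fun _ => φ) i) = of (φ := fun _ => φ) (σ i)) :
    Ψ.comp (base fun _ : ι => φ) = base fun _ : ι => φ := by
  obtain ⟨i⟩ := ‹Nonempty ι›
  rw [← of_comp_eq_base i, ← MonoidHom.comp_assoc, hΨ, of_comp_eq_base, of_comp_eq_base]

end Monoid.PushoutI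

namespace IsReducedDatum

open PushoutI

variable {A H : Type*} [Group A] [Group H] {n : ℕ} {φ : A →* H}
  {g : PushoutI (fun _ : Fin n => φ)} {a : A} {l : List (Fin n × H)}

def word (hred : IsReducedDatum φ g a l) : CoprodI.Word (fun _ : Fin n => H) where
  toList := l.map fun p => ⟨p.1, p.2⟩
  ne_one := by
    simp only [List.mem_map, forall_exists_index, and_imp]
    rintro _ p hp rfl hp1
    exact hred.1 p hp ⟨1, (map_one φ).trans hp1.symm⟩
  chain_ne := by
    rw [List.isChain_map]
    exact hred.2.1

theorem reduced_word (hred : IsReducedDatum φ g a l) :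
    Reduced (fun _ : Fin n => φ) hred.word := by
  simp only [Reduced, word, List.mem_map, forall_exists_index, and_imp]
  rintro _ p hp rfl
  exact hred.1 p hp

theorem map_fst_word (hred : IsReducedDatum φ g a l) :
    hred.word.toList.map Sigma.fst = l.map Prod.fst := by
  simp [word]

theorem eq_base_mul_prod_word (hred : IsReducedDatum φ g a l) :
    g = base (fun _ : Fin n => φ) a * ofCoprodI hred.word.prod := by
  refine hred.2.2.trans ?_
  simp only [word, CoprodI.Word.prod, map_list_prod, List.map_map]
  rfl

theorem map_fst_eq (hφ : Function.Injective φ) {a' : A} {l' : List (Fin n × H)}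
    (hred : IsReducedDatum φ g a l) (hred' : IsReducedDatum φ g a' l') :
    l.map Prod.fst = l'.map Prod.fst := by
  rw [← hred.map_fst_word, ← hred'.map_fst_word]
  exact hred.reduced_word.map_fst_eq_of_base_mul_prod_eq (fun _ => hφ) hred'.reduced_word
    (hred.eq_base_mul_prod_word.symm.trans hred'.eq_base_mul_prod_word)

theorem apply_of_forall_comp_of [Nonempty (Fin n)]
    {Ψ : PushoutI (fun _ : Fin n => φ) →* PushoutI (fun _ : Fin n => φ)} {σ : Fin n → Fin n}
    (hσ : Function.Injective σ)
    (hΨ : ∀ i, Ψ.comp (of (φ := fun _ => φ) i) = of (φ := fun _ => φ) (σ i))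
    (hred : IsReducedDatum φ g a l) :
    IsReducedDatum φ (Ψ g) a (l.map (Prod.map σ id)) := by
  obtain ⟨hrange, hchain, rfl⟩ := hred
  refine ⟨List.forall_mem_map.2 hrange, List.isChain_map _ |>.2 ?_, ?_⟩
  · exact hchain.imp fun p q hpq h => hpq (hσ h)
  · have hbase := DFunLike.congr_fun (comp_base_of_forall_comp_of hΨ) a
    rw [MonoidHom.comp_apply] at hbase
    rw [map_mul, hbase, map_list_prod, List.map_map, List.map_map]
    exact congrArg (_ * List.prod ·) <|
      List.map_congr_left fun (p : Fin n × H) _ => DFunLike.congr_fun (hΨ p.1) p.2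

end IsReducedDatum

theorem perm_action_free_on_full_support_words_general {A H : Type*} [Group A] [Group H]
    (φ : A →* H) (hφ : Function.Injective φ) (n : ℕ)
    (Φ : Equiv.Perm (Fin n) →
      (Monoid.PushoutI (fun _ : Fin n => φ) →* Monoid.PushoutI (fun _ : Fin n => φ)))
    (hΦ : ∀ (σ : Equiv.Perm (Fin n)) (i : Fin n),
      (Φ σ).comp (Monoid.PushoutI.of (φ := fun _ : Fin n => φ) i) =
        Monoid.PushoutI.of (φ := fun _ : Fin n => φ) (σ i))
    (g : Monoid.PushoutI (fun _ : Fin n => φ)) (a : A) (l : List (Fin n × H))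
    (hred : IsReducedDatum φ g a l)
    (hrep : ∀ i : Fin n, ∃ p ∈ l, p.1 = i)
    (σ : Equiv.Perm (Fin n)) (hσ : Φ σ g = g) :
    σ = 1 := by
  rcases isEmpty_or_nonempty (Fin n) with _ | _
  · exact Subsingleton.elim σ 1
  have hperm : IsReducedDatum φ g a (l.map (Prod.map σ id)) :=
    hσ ▸ hred.apply_of_forall_comp_of σ.injective (hΦ σ)
  have hfix : ∀ p ∈ l, σ p.1 = p.1 :=
    List.map_eq_map_iff.1 (by simpa [List.map_map] using hperm.map_fst_eq hφ hred)
  ext i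
  obtain ⟨p, hp, rfl⟩ := hrep i
  exact congrArg Fin.val (hfix p hp)

/-- The action of the symmetric group on the set of reduced words in which every factor
subgroup is represented is free (Section 3.2 of the paper): if `g` is a reduced word of
length `≥ 1` in which every index is represented and `Φ σ g = g`, then `σ = 1`. -/
theorem perm_action_free_on_full_support_words {A H : Type*} [Group A] [Group H]
    (φ : A →* H) (hφ : Function.Injective φ) (n : ℕ)
    (Φ : Equiv.Perm (Fin n) →
      (Monoid.PushoutI (fun _ : Fin n => φ) →* Monoid.PushoutI (fun _ : Fin n => φ)))
    (hΦ : ∀ (σ : Equiv.Perm (Fin n)) (i : Fin n),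
      (Φ σ).comp (Monoid.PushoutI.of (φ := fun _ : Fin n => φ) i) =
        Monoid.PushoutI.of (φ := fun _ : Fin n => φ) (σ i))
    (g : Monoid.PushoutI (fun _ : Fin n => φ)) (a : A) (l : List (Fin n × H))
    (hlen : 1 ≤ l.length)
    (hred : IsReducedDatum φ g a l)
    (hrep : ∀ i : Fin n, ∃ p ∈ l, p.1 = i)
    (σ : Equiv.Perm (Fin n)) (hσ : Φ σ g = g) :
    σ = 1 :=
  perm_action_free_on_full_support_words_general φ hφ n Φ hΦ g a l hred hrep σ hσ
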